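/- arXiv:1410.5249 — 2 statements merged into one kernel-verified Lean document; each statement's English description precedes it below -/
import Mathlib

section
/- Let A be a commutative ring without S-torsion and S a truncation set. Then the map Ψ_S : A^S → A^S, Ψ_S(a)_m = ∑_{n ∈ S, n ∣ m} n·a_n^{m/n}, is injective, its image is exactly X_S(A), and the resulting bijection Ψ_S : A^S → X_S(A) is a homeomorphism for the product topologies (A discrete). -/
/-- `S/n = {ν : νn ∈ S}`. -/
def truncDiv (S : Set ℕ) (n : ℕ) : Set ℕ := {ν | ν * n ∈ S}

/-- A truncation set: a nonempty set of positive integers closed under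
taking positive divisors. -/
def IsTruncationSet (S : Set ℕ) : Prop :=
  S.Nonempty ∧ (∀ n ∈ S, 0 < n) ∧ ∀ n ∈ S, ∀ d : ℕ, d ∣ n → 0 < d → d ∈ S

/-- Verschiebung `V_n : A^{S/n} → A^S`. -/
def Versch {A : Type*} [CommRing A] (S : Set ℕ) (n : ℕ)
    (a : truncDiv S n → A) : S → A :=
  fun μ =>
    if h : n ∣ μ.1 then
      (n : A) * a ⟨μ.1 / n, show μ.1 / n * n ∈ S by
        rw [Nat.div_mul_cancel h]; exact μ.2⟩
    else 0

/-- The product topology on `A^S`, `A` discrete. -/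
def prodTop (S : Set ℕ) (A : Type*) : TopologicalSpace (S → A) :=
  @Pi.topologicalSpace S (fun _ => A) fun _ => ⊥

/-- `X_S(J)`: the topological closure of the additive subgroup of `A^S`
generated by the elements `V_n⟨a⟩`, `n ∈ S`, `a ∈ J`. -/
def XS (S : Set ℕ) {A : Type*} [CommRing A] (J : Set A) : Set (S → A) :=
  @closure _ (prodTop S A)
    (AddSubgroup.closure
      {x | ∃ n ∈ S, ∃ a ∈ J, x = Versch S n fun ν => a ^ ν.1} : Set (S → A))

open Classical in
/-- `Ψ_S : A^S → A^S`, `Ψ_S(a)_m = ∑_{n ∈ S, n ∣ m} n·a_n^{m/n}`. -/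
noncomputable def PsiS (S : Set ℕ) {A : Type*} [CommRing A] (a : S → A) :
    S → A :=
  fun m => ∑ n ∈ ((m : ℕ).divisors.filter (· ∈ S)).attach,
    (n.1 : A) * (a ⟨n.1, (Finset.mem_filter.mp n.2).2⟩) ^ ((m : ℕ) / n.1)


/-!
In terms of the ghost components `ghost S x m = ∑_{n ∣ m, n ∈ S} n * x n ^ (m / n)`, the
equation `ghost S x = w` can be solved for `x m` by recursion over the divisors of `m` as soon
as `m` divides `w m` minus the terms of lower order. Without `S`-torsion the solution is unique,
which gives injectivity; as `x m` depends only on the values of `w` at divisors of `m`, the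
inverse is continuous and the range is closed.

Every `Ψ_S(a) = ∑ₙ V_n⟨a_n⟩` is a limit of finite sums of generators, so it lies in `X_S(A)`.
Conversely the range contains `V_n⟨c⟩ = Ψ_S(c·δ_n)` and is a subgroup by Dwork's lemma: ghost
vectors `w` with `p ^ v_p(m) ∣ w m - F_p(w (m / p))` for Frobenius lifts `F_p` have a preimage.
The universal difference `Ψ(X) - Ψ(Y)` over `ℤ[X, Y]` satisfies these congruences, and
specialising `X, Y` gives the difference of any two points of the range.
-/

open Finset

theorem IsTruncationSet.zero_notMem {S : Set ℕ} (hS : IsTruncationSet S) : 0 ∉ S :=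
  fun h => (hS.2.1 0 h).false

theorem IsTruncationSet.div_mem {S : Set ℕ} (hS : IsTruncationSet S) {m d : ℕ} (hm : m ∈ S)
    (hd : d ∣ m) : m / d ∈ S :=
  have hm0 := hS.2.1 m hm
  hS.2.2 m hm _ (Nat.div_dvd_of_dvd hd)
    (Nat.div_pos (Nat.le_of_dvd hm0 hd) (Nat.pos_of_dvd_of_pos hd hm0))

section Ghost

variable {A : Type*} [CommRing A] (S : Set ℕ)

open Classical in
noncomputable def ghost (x : ℕ → A) (m : ℕ) : A :=
  ∑ n ∈ m.divisors with n ∈ S, (n : A) * x n ^ (m / n)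

open Classical in
noncomputable def ghostTail (x : ℕ → A) (m : ℕ) : A :=
  ∑ n ∈ m.properDivisors with n ∈ S, (n : A) * x n ^ (m / n)

open Classical in
/-- Solves `ghost S x = w` for `x`, by recursion over divisors; junk `0` where the division
by `m` fails. -/
noncomputable def ghostInv (w : ℕ → A) (m : ℕ) : A :=
  if h : (m : A) ∣ w m - ∑ n ∈ (m.properDivisors.filter (· ∈ S)).attach,
      (n : A) * ghostInv w n ^ (m / n) then h.choose else 0
termination_by m
decreasing_by exact (Nat.mem_properDivisors.mp (mem_filter.mp n.2).1).2

theorem ghost_eq_mul_add_ghostTail (x : ℕ → A) {m : ℕ} (hm : m ∈ S) (hm0 : m ≠ 0) :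
    ghost S x m = m * x m + ghostTail S x m := by
  classical
  rw [ghost, ghostTail, ← Nat.insert_self_properDivisors hm0, filter_insert, if_pos hm,
    sum_insert fun h => Nat.self_notMem_properDivisors (mem_filter.mp h).1,
    Nat.div_self (Nat.pos_of_ne_zero hm0), pow_one]

theorem ghostTail_congr {x y : ℕ → A} {m : ℕ} (h : ∀ n ∈ S, n ∣ m → n < m → x n = y n) :
    ghostTail S x m = ghostTail S y m := by
  classical
  refine sum_congr rfl fun n hn => ?_
  obtain ⟨hn, hnS⟩ := mem_filter.mp hn
  obtain ⟨hnm, hlt⟩ := Nat.mem_properDivisors.mp hn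
  rw [h n hnS hnm hlt]

theorem map_ghost {B F : Type*} [CommRing B] [FunLike F A B] [RingHomClass F A B] (f : F)
    (x : ℕ → A) (m : ℕ) : f (ghost S x m) = ghost S (fun n => f (x n)) m := by
  simp only [ghost, map_sum, map_mul, map_pow, map_natCast]

open Classical in
theorem ghostInv_eq (w : ℕ → A) (m : ℕ) :
    ghostInv S w m =
      if h : (m : A) ∣ w m - ghostTail S (ghostInv S w) m then h.choose else 0 := by
  rw [ghostInv, ghostTail, sum_attach _ fun n : ℕ => (n : A) * ghostInv S w n ^ (m / n)]

theorem ghost_ghostInv_of_dvd {w : ℕ → A} {m : ℕ} (hm : m ∈ S) (hm0 : m ≠ 0)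
    (h : (m : A) ∣ w m - ghostTail S (ghostInv S w) m) : ghost S (ghostInv S w) m = w m := by
  rw [ghost_eq_mul_add_ghostTail S _ hm hm0, ghostInv_eq S w m, dif_pos h, ← h.choose_spec,
    sub_add_cancel]

theorem ghostInv_congr {w w' : ℕ → A} {m : ℕ} (hm : m ∈ S)
    (h : ∀ d ∈ S, d ∣ m → w d = w' d) : ghostInv S w m = ghostInv S w' m := by
  induction m using Nat.strong_induction_on with
  | _ m ih =>
    have htail : ghostTail S (ghostInv S w) m = ghostTail S (ghostInv S w') m :=
      ghostTail_congr S fun n hnS hnm hlt =>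
        ih n hlt hnS fun d hd hdn => h d hd (hdn.trans hnm)
    rw [ghostInv_eq, ghostInv_eq, htail, h m hm dvd_rfl]

theorem ghostInv_ghost (h0 : 0 ∉ S)
    (htf : ∀ n ∈ S, Function.Injective fun a : A => (n : A) * a) (x : ℕ → A) {m : ℕ} (hm : m ∈ S) : ghostInv S (ghost S x) m = x m := by
  induction m using Nat.strong_induction_on with
  | _ m ih =>
    have hm0 : m ≠ 0 := ne_of_mem_of_not_mem hm h0
    have htail : ghostTail S (ghostInv S (ghost S x)) m = ghostTail S x m :=
      ghostTail_congr S fun n hnS _ hlt => ih n hlt hnS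
    have hdvd : (m : A) ∣ ghost S x m - ghostTail S (ghostInv S (ghost S x)) m :=
      ⟨x m, by rw [htail, ghost_eq_mul_add_ghostTail S x hm hm0, add_sub_cancel_right]⟩
    have h := ghost_ghostInv_of_dvd S hm hm0 hdvd
    rw [ghost_eq_mul_add_ghostTail S _ hm hm0, ghost_eq_mul_add_ghostTail S _ hm hm0,
      htail] at h
    exact htf m hm (add_right_cancel h)

end Ghost

theorem Nat.dvd_div_comm_of_dvd {m n p : ℕ} (hn : n ∣ m) (hp : p ∣ m) :
    n ∣ m / p ↔ p ∣ m / n := by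
  rw [Nat.dvd_div_iff_mul_dvd hp, Nat.dvd_div_iff_mul_dvd hn, mul_comm]

section Frobenius

variable {B : Type*} [CommRing B]

theorem natCast_pow_factorization_dvd (n p : ℕ) : (p : B) ^ n.factorization p ∣ (n : B) := by
  exact_mod_cast Nat.cast_dvd_cast (Nat.ordProj_dvd n p)

theorem natCast_dvd_of_forall_pow_factorization_dvd {m : ℕ} (hm : m ≠ 0) {b : B}
    (h : ∀ p ∈ m.primeFactors, (p : B) ^ m.factorization p ∣ b) : (m : B) ∣ b := by
  have hprod : (m : B) = ∏ p ∈ m.primeFactors, (p : B) ^ m.factorization p := by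
    conv_lhs => rw [Nat.prod_primeFactors_pow_factorization hm]
    push_cast
    rfl
  rw [hprod]
  refine prod_dvd_of_coprime (fun p hp q hq hpq => ?_) h
  exact_mod_cast (((Nat.coprime_primes (Nat.prime_of_mem_primeFactors hp)
    (Nat.prime_of_mem_primeFactors hq)).mpr hpq).pow _ _).cast (R := B)

theorem pow_factorization_add_one_dvd_pow_sub_pow {p : ℕ} {a b : B} (h : (p : B) ∣ a - b)
    (k : ℕ) : (p : B) ^ (k.factorization p + 1) ∣ a ^ k - b ^ k := by
  have hk : p ^ k.factorization p * (k / p ^ k.factorization p) = k :=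
    Nat.ordProj_mul_ordCompl_eq_self k p
  calc (p : B) ^ (k.factorization p + 1)
      ∣ (a ^ p ^ k.factorization p) ^ (k / p ^ k.factorization p)
        - (b ^ p ^ k.factorization p) ^ (k / p ^ k.factorization p) :=
        (dvd_sub_pow_of_dvd_sub h _).trans (sub_dvd_pow_sub_pow _ _ _)
    _ = a ^ k - b ^ k := by rw [← pow_mul, ← pow_mul, hk]

theorem MvPolynomial.natCast_dvd_expand_sub_pow {σ : Type*} {p : ℕ} (hp : p.Prime)
    (f : MvPolynomial σ ℤ) : (p : MvPolynomial σ ℤ) ∣ MvPolynomial.expand p f - f ^ p := by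
  have : Fact p.Prime := ⟨hp⟩
  rw [← MvPolynomial.C_eq_coe_nat, MvPolynomial.C_dvd_iff_zmod, map_sub, map_pow,
    MvPolynomial.map_expand, MvPolynomial.expand_zmod, sub_self]

theorem pow_factorization_dvd_ghost_term {F : Type*} [FunLike F B B] [RingHomClass F B B]
    (φ : F) {p : ℕ} (hp : p.Prime) (hφ : ∀ b, (p : B) ∣ φ b - b ^ p) (b : B) {n k : ℕ}
    (hn : n ≠ 0) (hk : k ≠ 0) :
    (p : B) ^ (n * k).factorization p ∣
      n * b ^ k - if p ∣ k then n * φ b ^ (k / p) else 0 := by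
  by_cases hpk : p ∣ k
  · obtain ⟨j, rfl⟩ := hpk
    have hj : j ≠ 0 := right_ne_zero_of_mul hk
    have hv : (n * (p * j)).factorization p = n.factorization p + (j.factorization p + 1) := by
      rw [Nat.factorization_mul hn hk, Nat.factorization_mul hp.ne_zero hj]
      simp only [Finsupp.add_apply, hp.factorization_self]
      ring
    rw [if_pos (dvd_mul_right p j), Nat.mul_div_cancel_left j hp.pos, pow_mul, ← mul_sub, hv,
      pow_add]
    exact mul_dvd_mul (natCast_pow_factorization_dvd n p)
      (pow_factorization_add_one_dvd_pow_sub_pow (dvd_sub_comm.mp (hφ b)) j)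
  · rw [if_neg hpk, sub_zero, Nat.factorization_mul hn hk, Finsupp.add_apply,
      Nat.factorization_eq_zero_of_not_dvd hpk, add_zero]
    exact (natCast_pow_factorization_dvd n p).mul_right _

theorem pow_factorization_dvd_ghost_sub_frobenius (S : Set ℕ) {F : Type*} [FunLike F B B]
    [RingHomClass F B B] (φ : F) {p : ℕ}
    (hp : p.Prime) (hφ : ∀ b, (p : B) ∣ φ b - b ^ p) (x : ℕ → B) {m : ℕ} (hm : m ≠ 0)
    (hpm : p ∣ m) : (p : B) ^ m.factorization p ∣ ghost S x m - φ (ghost S x (m / p)) := by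
  classical
  have hfrob : φ (ghost S x (m / p)) = ∑ n ∈ m.divisors with n ∈ S,
      if p ∣ m / n then (n : B) * φ (x n) ^ (m / n / p) else 0 := by
    rw [map_ghost, ghost, ← sum_filter, filter_filter]
    refine sum_congr (Finset.ext fun n => ?_) fun n hn => ?_
    · have hmp : m / p ≠ 0 :=
        (Nat.div_pos (Nat.le_of_dvd (Nat.pos_of_ne_zero hm) hpm) hp.pos).ne'
      simp only [mem_filter, Nat.mem_divisors]
      constructor
      · rintro ⟨⟨hnmp, -⟩, hnS⟩
        have hnm := hnmp.trans (Nat.div_dvd_of_dvd hpm)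
        exact ⟨⟨hnm, hm⟩, hnS, (Nat.dvd_div_comm_of_dvd hnm hpm).mp hnmp⟩
      · rintro ⟨⟨hnm, -⟩, hnS, hpn⟩
        exact ⟨⟨(Nat.dvd_div_comm_of_dvd hnm hpm).mpr hpn, hmp⟩, hnS⟩
    · rw [Nat.div_div_eq_div_mul, Nat.div_div_eq_div_mul, mul_comm n p, mul_comm]
  rw [hfrob, ghost, ← sum_sub_distrib]
  refine dvd_sum fun n hn => ?_
  obtain ⟨hnm, -⟩ := Nat.mem_divisors.mp (mem_filter.mp hn).1
  have hn0 : n ≠ 0 := ne_zero_of_dvd_ne_zero hm hnm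
  simpa only [Nat.mul_div_cancel' hnm] using pow_factorization_dvd_ghost_term φ hp hφ (x n) hn0
    (Nat.div_ne_zero_iff_of_dvd hnm |>.mpr ⟨hm, hn0⟩)

theorem ghost_ghostInv_of_frobenius_congr {S : Set ℕ} (hS : IsTruncationSet S)
    {F : Type*} [FunLike F B B] [RingHomClass F B B] (φ : ℕ → F)
    (hφ : ∀ p : ℕ, p.Prime → ∀ b : B, (p : B) ∣ φ p b - b ^ p) (w : ℕ → B)
    (hw : ∀ m ∈ S, ∀ p : ℕ, p.Prime → p ∣ m →
      (p : B) ^ m.factorization p ∣ w m - φ p (w (m / p))) :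
    ∀ m ∈ S, ghost S (ghostInv S w) m = w m := by
  intro m hm
  induction m using Nat.strong_induction_on with
  | _ m ih =>
    have hm0 : m ≠ 0 := ne_of_mem_of_not_mem hm hS.zero_notMem
    refine ghost_ghostInv_of_dvd S hm hm0
      (natCast_dvd_of_forall_pow_factorization_dvd hm0 fun p hp => ?_)
    obtain ⟨hpp, hpm, -⟩ := Nat.mem_primeFactors.mp hp
    set z := ghostInv S w
    have hlt : m / p < m := Nat.div_lt_self (Nat.pos_of_ne_zero hm0) hpp.one_lt
    have hsplit : w m - ghostTail S z m = (w m - φ p (w (m / p)))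
        - (ghost S z m - φ p (ghost S z (m / p))) + m * z m := by
      rw [ih _ hlt (hS.div_mem hm hpm), ghost_eq_mul_add_ghostTail S z hm hm0]
      ring
    rw [hsplit]
    exact dvd_add (dvd_sub (hw m hm p hpp hpm)
        (pow_factorization_dvd_ghost_sub_frobenius S (φ p) hpp (hφ p hpp) z hm0 hpm))
      ((natCast_pow_factorization_dvd m p).mul_right _)

end Frobenius

open MvPolynomial in
theorem exists_ghost_eq_sub {A : Type*} [CommRing A] {S : Set ℕ} (hS : IsTruncationSet S)
    (x y : ℕ → A) : ∃ z : ℕ → A, ∀ m ∈ S, ghost S z m = ghost S x m - ghost S y m := by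
  let X₁ : ℕ → MvPolynomial (ℕ ⊕ ℕ) ℤ := fun n => X (Sum.inl n)
  let X₂ : ℕ → MvPolynomial (ℕ ⊕ ℕ) ℤ := fun n => X (Sum.inr n)
  have hfrob (p : ℕ) (hp : p.Prime) (b : MvPolynomial (ℕ ⊕ ℕ) ℤ) :
      (p : MvPolynomial (ℕ ⊕ ℕ) ℤ) ∣ expand p b - b ^ p :=
    natCast_dvd_expand_sub_pow hp b
  have hcongr (x : ℕ → MvPolynomial (ℕ ⊕ ℕ) ℤ) (m : ℕ) (hm : m ∈ S) (p : ℕ) (hp : p.Prime)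
      (hpm : p ∣ m) : (p : MvPolynomial (ℕ ⊕ ℕ) ℤ) ^ m.factorization p ∣
        ghost S x m - expand p (ghost S x (m / p)) :=
    pow_factorization_dvd_ghost_sub_frobenius S (expand p) hp (hfrob p hp) x
      (ne_of_mem_of_not_mem hm hS.zero_notMem) hpm
  let w : ℕ → MvPolynomial (ℕ ⊕ ℕ) ℤ := fun m => ghost S X₁ m - ghost S X₂ m
  have hlift := ghost_ghostInv_of_frobenius_congr hS (fun p => expand p) hfrob w
    fun m hm p hp hpm => by
      simpa only [w, map_sub, sub_sub_sub_comm] using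
        dvd_sub (hcongr X₁ m hm p hp hpm) (hcongr X₂ m hm p hp hpm)
  let f := aeval (R := ℤ) (Sum.elim x y)
  refine ⟨fun n => f (ghostInv S w n), fun m hm => ?_⟩
  rw [← map_ghost, hlift m hm, map_sub, map_ghost, map_ghost]
  simp [f, X₁, X₂]

theorem DependsOn.continuous_of_finite {ι X Y : Type*} [TopologicalSpace X] [DiscreteTopology X]
    [TopologicalSpace Y] {f : (ι → X) → Y} {s : Set ι} (hs : s.Finite) (hf : DependsOn f s) :
    Continuous f := by
  refine IsLocallyConstant.continuous ((IsLocallyConstant.iff_eventually_eq f).mpr fun x => ?_)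
  have hU : IsOpen (s.pi fun i => {x i}) := isOpen_set_pi hs fun i _ => isOpen_discrete _
  filter_upwards [hU.mem_nhds fun i _ => rfl] with y hy
  exact hf hy

theorem exists_eqOn_of_mem_closure_pi {ι X : Type*} [TopologicalSpace X] [DiscreteTopology X]
    {T : Set (ι → X)} {y : ι → X} (hy : y ∈ closure T) {s : Set ι} (hs : s.Finite) :
    ∃ t ∈ T, ∀ i ∈ s, t i = y i := by
  have hU : IsOpen (s.pi fun i => {y i}) := isOpen_set_pi hs fun i _ => isOpen_discrete _
  obtain ⟨t, hts, htT⟩ := mem_closure_iff.mp hy _ hU fun i _ => rfl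
  exact ⟨t, htT, hts⟩

section PsiS

variable {A : Type*} [CommRing A] {S : Set ℕ}

theorem finite_setOf_val_dvd (h0 : 0 ∉ S) (m : S) : {d : S | (d : ℕ) ∣ m}.Finite :=
  ((Set.finite_Iic (m : ℕ)).preimage Subtype.val_injective.injOn).subset fun _ hd =>
    Nat.le_of_dvd (Nat.pos_of_ne_zero (ne_of_mem_of_not_mem m.2 h0)) hd

theorem extend_val_apply (y : S → A) {n : ℕ} (hn : n ∈ S) :
    Function.extend Subtype.val y 0 n = y ⟨n, hn⟩ :=
  Subtype.val_injective.extend_apply y 0 ⟨n, hn⟩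

open Classical in
theorem PsiS_comp_val (z : ℕ → A) (m : S) : PsiS S (fun s => z s) m = ghost S z m :=
  sum_attach _ fun n : ℕ => (n : A) * z n ^ ((m : ℕ) / n)

theorem PsiS_eq_ghost_extend (a : S → A) (m : S) :
    PsiS S a m = ghost S (Function.extend Subtype.val a 0) m := by
  simpa only [Subtype.val_injective.extend_apply] using
    PsiS_comp_val (Function.extend Subtype.val a 0) m

open Classical in
theorem dependsOn_PsiS_apply (m : S) :
    DependsOn (fun a : S → A => PsiS S a m) {d : S | (d : ℕ) ∣ m} := fun a b h =>
  sum_congr rfl fun n _ => by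
    rw [h _ (Nat.mem_divisors.mp (mem_filter.mp n.2).1).1]

theorem Versch_pow_apply (c : A) (n : ℕ) (m : S) :
    Versch S n (fun ν => c ^ ν.1) m = if n ∣ m then (n : A) * c ^ ((m : ℕ) / n) else 0 := by
  rw [Versch]
  split_ifs <;> rfl

theorem Versch_zero_pow (h0 : 0 ∉ S) (n : ℕ) : Versch S n (fun ν => (0 : A) ^ ν.1) = 0 := by
  funext m
  rw [Versch_pow_apply]
  split_ifs with hnm
  · have hm0 : (m : ℕ) ≠ 0 := ne_of_mem_of_not_mem m.2 h0
    rw [zero_pow (Nat.div_ne_zero_iff_of_dvd hnm |>.mpr ⟨hm0, ne_zero_of_dvd_ne_zero hm0 hnm⟩),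
      mul_zero, Pi.zero_apply]
  · rfl

open Classical in
theorem hasSum_PsiS [TopologicalSpace A] (h0 : 0 ∉ S) (a : S → A) :
    HasSum (fun n : S => Versch S n fun ν => a n ^ ν.1) (PsiS S a) := by
  refine Pi.hasSum.mpr fun m => ?_
  have hm0 : (m : ℕ) ≠ 0 := ne_of_mem_of_not_mem m.2 h0
  have hsum : ∑ n ∈ (m : ℕ).divisors.subtype (· ∈ S), Versch S n (fun ν => a n ^ ν.1) m =
      PsiS S a m := by
    rw [Finset.subtype, sum_map, PsiS]
    exact sum_congr rfl fun n _ => dif_pos (Nat.mem_divisors.mp (mem_filter.mp n.2).1).1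
  rw [← hsum]
  refine hasSum_sum_of_ne_finset_zero fun n hn => dif_neg fun hnm => hn ?_
  exact mem_subtype.mpr (Nat.mem_divisors.mpr ⟨hnm, hm0⟩)

theorem PsiS_single (h0 : 0 ∉ S) (n : S) (c : A) :
    PsiS S (Pi.single n c) = Versch S n fun ν => c ^ ν.1 := by
  let _ : TopologicalSpace A := ⊥
  have _ : DiscreteTopology A := ⟨rfl⟩
  refine (hasSum_PsiS h0 _).unique ?_
  convert hasSum_single n fun k hk => ?_ using 1
  · rw [Pi.single_eq_same]
  · rw [Pi.single_eq_of_ne hk, Versch_zero_pow h0]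

theorem exists_PsiS_eq_sub (hS : IsTruncationSet S) (a b : S → A) :
    ∃ c, PsiS S c = PsiS S a - PsiS S b := by
  obtain ⟨z, hz⟩ := exists_ghost_eq_sub hS (Function.extend Subtype.val a 0)
    (Function.extend Subtype.val b 0)
  refine ⟨fun s => z s, funext fun m => ?_⟩
  rw [PsiS_comp_val, hz m m.2, Pi.sub_apply, PsiS_eq_ghost_extend, PsiS_eq_ghost_extend]

theorem addSubgroupClosure_subset_range_PsiS (hS : IsTruncationSet S) :
    (AddSubgroup.closure {x | ∃ n ∈ S, ∃ a ∈ (Set.univ : Set A),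
      x = Versch S n fun ν => a ^ ν.1} : Set (S → A)) ⊆ Set.range (PsiS S) := by
  let G : AddSubgroup (S → A) := AddSubgroup.ofSub (Set.range (PsiS S)) ⟨_, 0, rfl⟩ <| by
    rintro _ ⟨a, rfl⟩ _ ⟨b, rfl⟩
    obtain ⟨c, hc⟩ := exists_PsiS_eq_sub hS a b
    exact ⟨c, by rw [hc, sub_eq_add_neg]⟩
  refine SetLike.coe_subset_coe.mpr ((AddSubgroup.closure_le G).mpr ?_)
  rintro _ ⟨n, hn, c, -, rfl⟩
  exact ⟨Pi.single ⟨n, hn⟩ c, PsiS_single hS.zero_notMem _ c⟩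

end PsiS

section PsiSInv

variable {A : Type*} [CommRing A] {S : Set ℕ}

variable (S) in
noncomputable def PsiSInv (y : S → A) : S → A :=
  fun m => ghostInv S (Function.extend Subtype.val y 0) m

theorem dependsOn_PsiSInv_apply (m : S) :
    DependsOn (fun y : S → A => PsiSInv S y m) {d : S | (d : ℕ) ∣ m} := fun y y' h =>
  ghostInv_congr S m.2 fun d hd hdm => by
    rw [extend_val_apply y hd, extend_val_apply y' hd, h ⟨d, hd⟩ hdm]

theorem PsiSInv_PsiS (h0 : 0 ∉ S) (htf : ∀ n ∈ S, Function.Injective fun x : A => (n : A) * x)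
    (a : S → A) : PsiSInv S (PsiS S a) = a := by
  funext m
  calc PsiSInv S (PsiS S a) m
      = ghostInv S (ghost S (Function.extend Subtype.val a 0)) m :=
        ghostInv_congr S m.2 fun d hd _ => by
          rw [extend_val_apply _ hd, PsiS_eq_ghost_extend]
    _ = a m := by
      rw [ghostInv_ghost S h0 htf _ m.2, Subtype.val_injective.extend_apply]

theorem PsiS_PsiSInv_of_mem_range (h0 : 0 ∉ S)
    (htf : ∀ n ∈ S, Function.Injective fun x : A => (n : A) * x) {y : S → A}
    (hy : y ∈ Set.range (PsiS S)) : PsiS S (PsiSInv S y) = y := by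
  obtain ⟨a, rfl⟩ := hy
  rw [PsiSInv_PsiS h0 htf]

variable [TopologicalSpace A] [DiscreteTopology A]

theorem continuous_PsiS (h0 : 0 ∉ S) : Continuous (PsiS S (A := A)) :=
  continuous_pi fun m => (dependsOn_PsiS_apply m).continuous_of_finite (finite_setOf_val_dvd h0 m)

theorem continuous_PsiSInv (h0 : 0 ∉ S) : Continuous (PsiSInv S (A := A)) :=
  continuous_pi fun m =>
    (dependsOn_PsiSInv_apply m).continuous_of_finite (finite_setOf_val_dvd h0 m)

theorem isClosed_range_PsiS (h0 : 0 ∉ S)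
    (htf : ∀ n ∈ S, Function.Injective fun x : A => (n : A) * x) :
    IsClosed (Set.range (PsiS S (A := A))) := by
  refine isClosed_of_closure_subset fun y hy => ⟨PsiSInv S y, funext fun m => ?_⟩
  obtain ⟨_, ⟨b, rfl⟩, hb⟩ := exists_eqOn_of_mem_closure_pi hy (finite_setOf_val_dvd h0 m)
  calc PsiS S (PsiSInv S y) m = PsiS S (PsiSInv S (PsiS S b)) m :=
        dependsOn_PsiS_apply m fun d hd =>
          dependsOn_PsiSInv_apply d fun e he => (hb e (he.trans hd)).symm
    _ = y m := by rw [PsiSInv_PsiS h0 htf, hb m dvd_rfl]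

end PsiSInv

theorem range_PsiS_eq_XS {A : Type*} [CommRing A] {S : Set ℕ} (hS : IsTruncationSet S)
    (htf : ∀ n ∈ S, Function.Injective fun x : A => (n : A) * x) :
    Set.range (PsiS S (A := A)) = XS S (Set.univ : Set A) := by
  let _ : TopologicalSpace A := ⊥
  have _ : DiscreteTopology A := ⟨rfl⟩
  refine subset_antisymm ?_ ?_
  · rintro _ ⟨a, rfl⟩
    exact mem_closure_of_tendsto (hasSum_PsiS hS.zero_notMem a) <| Filter.Eventually.of_forall
      fun s => AddSubgroup.sum_mem _ fun n _ =>
        AddSubgroup.subset_closure ⟨n, n.2, a n, trivial, rfl⟩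
  · exact closure_minimal (addSubgroupClosure_subset_range_PsiS hS)
      (isClosed_range_PsiS hS.zero_notMem htf)

/-- For a commutative ring `A` without `S`-torsion, `Ψ_S : A^S → A^S` is
injective with image exactly `X_S(A)`, and the resulting bijection
`A^S → X_S(A)` is a homeomorphism (`A` discrete, product topologies). -/
theorem statement5 {A : Type*} [CommRing A] (S : Set ℕ)
    (hS : IsTruncationSet S)
    (htf : ∀ n ∈ S, Function.Injective fun x : A => (n : A) * x) :
    Function.Injective (PsiS S (A := A)) ∧
    Set.range (PsiS S (A := A)) = XS S (Set.univ : Set A) ∧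
    ∃ e : (↥S → A) ≃ ↥(XS S (Set.univ : Set A)),
      (∀ a : ↥S → A, (e a).1 = PsiS S a) ∧
      @Continuous _ _ (prodTop S A)
        (TopologicalSpace.induced Subtype.val (prodTop S A)) e ∧
      @Continuous _ _ (TopologicalSpace.induced Subtype.val (prodTop S A))
        (prodTop S A) e.symm := by
  let _ : TopologicalSpace A := ⊥
  have _ : DiscreteTopology A := ⟨rfl⟩
  have h0 := hS.zero_notMem
  have hrange := range_PsiS_eq_XS hS htf
  let e : (S → A) ≃ XS S (Set.univ : Set A) :=
    { toFun := fun a => ⟨PsiS S a, hrange ▸ Set.mem_range_self a⟩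
      invFun := fun y => PsiSInv S y.1
      left_inv := PsiSInv_PsiS h0 htf
      right_inv := fun y => Subtype.ext (PsiS_PsiSInv_of_mem_range h0 htf (hrange.symm ▸ y.2)) }
  exact ⟨Function.LeftInverse.injective (PsiSInv_PsiS h0 htf), hrange, e, fun _ => rfl,
    (continuous_PsiS h0).subtype_mk _, (continuous_PsiSInv h0).comp continuous_subtype_val⟩
end

section
/- Let p be a prime and R a perfect 𝔽_p-algebra (commutative ring of characteristic p with bijective Frobenius). Let 𝔽_pR denote the monoid algebra over 𝔽_p of the multiplicative monoid of R, let π̄ : 𝔽_pR → R be the ring homomorphism sending each basis element [r] to r, and let λ : ℤR → 𝕎(𝔽_pR) be the ring homomorphism determined by λ([r]) = ⟨[r]⟩, the Teichmüller representative of the basis element [r] ∈ 𝔽_pR. Then λ is injective, and ⋂_{n ≥ 1} I^n = λ^{-1}( ker( 𝕎(π̄) : 𝕎(𝔽_pR) → 𝕎(R) ) ). -/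
/-!
Put `μ = 𝕎(π̄) ∘ λ : ℤR → 𝕎 R`, so `μ [r] = ⟨r⟩` and the zeroth coefficient of `μ` is `π`.
As `R` is perfect, `𝕎 R` is `p`-torsion free with `p 𝕎 R = {x | x₀ = 0}`, so `μ(Iⁿ) ⊆ pⁿ 𝕎 R`,
which kills the first `n` coefficients: `⋂ Iⁿ ⊆ ker μ`. Conversely, writing `r = aᵖ`, `s = bᵖ` and
expanding `([a] + [b])ᵖ = ([a + b] + u)ᵖ` shows `[r] + [s] - [r + s] ∈ I² + (p)`; hence
`I ⊆ I² + (p)`, and every `x ∈ Iⁿ⁺¹` is `pⁿ⁺¹ [t] + y` with `y ∈ Iⁿ⁺²`. If `μ x = 0` then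
`⟨t⟩ pⁿ⁺¹ ∈ pⁿ⁺² 𝕎 R`, whose `n+1`-st coefficient `t^(pⁿ⁺¹)` must vanish, so `t = 0` and `x ∈ Iⁿ⁺²`.

For injectivity, the zeroth coefficient of `λ` is reduction of coefficients mod `p`, so an element
of `ker λ` is `p z`; as `𝔽_pR` is perfect, `𝕎(𝔽_pR)` is `p`-torsion free and `z ∈ ker λ` again.
Thus elements of `ker λ` are divisible by every power of `p` in the free `ℤ`-module `ℤR`.
-/

noncomputable section

/-- The canonical projection `ℤR → R` from the monoid algebra of the
multiplicative monoid of `R`, sending `[r]` to `r`. -/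
def piHom (R : Type*) [CommRing R] : MonoidAlgebra ℤ R →+* R :=
  (MonoidAlgebra.lift ℤ R R (MonoidHom.id R)).toRingHom

/-- `I = ker (ℤR → R)`. -/
def Iideal (R : Type*) [CommRing R] : Ideal (MonoidAlgebra ℤ R) :=
  RingHom.ker (piHom R)

/-- The canonical projection `π̄ : 𝔽_pR → R` from the monoid algebra over
`𝔽_p` of the multiplicative monoid of `R`, sending `[r]` to `r`. -/
def piBar (p : ℕ) (R : Type*) [CommRing R] [CharP R p] :
    MonoidAlgebra (ZMod p) R →+* R :=
  letI : Algebra (ZMod p) R := ZMod.algebra R p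
  (MonoidAlgebra.lift (ZMod p) R R (MonoidHom.id R)).toRingHom

/-- The ring homomorphism `λ : ℤR → 𝕎(𝔽_pR)` with `λ [r] = ⟨[r]⟩`, the
Teichmüller representative of the basis element `[r] ∈ 𝔽_pR`. -/
def lamHom (p : ℕ) [Fact p.Prime] (R : Type*) [CommRing R] :
    MonoidAlgebra ℤ R →+* WittVector p (MonoidAlgebra (ZMod p) R) :=
  (MonoidAlgebra.lift ℤ (WittVector p (MonoidAlgebra (ZMod p) R)) R
    ((WittVector.teichmuller p).comp (MonoidAlgebra.of (ZMod p) R))).toRingHom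

namespace MonoidAlgebra

variable {M : Type*}

theorem ringHom_ext_int [Monoid M] {S : Type*} [Semiring S] {f g : MonoidAlgebra ℤ M →+* S}
    (h : ∀ m, f (of ℤ M m) = g (of ℤ M m)) : f = g :=
  ringHom_ext' (RingHom.ext_int _ _) (MonoidHom.ext h)

theorem exists_eq_smul_of_dvd_coeff (c : ℤ) (x : MonoidAlgebra ℤ M) (h : ∀ m, c ∣ x.coeff m) :
    ∃ z, x = c • z :=
  ⟨ofCoeff (x.coeff.mapRange (· / c) (Int.zero_ediv c)), by
    ext m; simp [Int.mul_ediv_cancel' (h m)]⟩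

theorem eq_zero_of_forall_exists_eq_pow_smul {c : ℤ} (hc : c.natAbs ≠ 1) {x : MonoidAlgebra ℤ M}
    (h : ∀ n : ℕ, ∃ z, x = c ^ n • z) : x = 0 := by
  ext m
  by_contra hm
  refine FiniteMultiplicity.not_iff_forall.2 (fun n => ?_) (Int.finiteMultiplicity_iff.2 ⟨hc, hm⟩)
  obtain ⟨z, rfl⟩ := h n
  simp

variable (p : ℕ) [Fact p.Prime]

instance charP_zmod [Monoid M] : CharP (MonoidAlgebra (ZMod p) M) p :=
  charP_of_injective_algebraMap' (ZMod p) p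

theorem frobenius_zmod_eq_mapDomainRingHom [CommMonoid M] :
    frobenius (MonoidAlgebra (ZMod p) M) p = mapDomainRingHom (ZMod p) (powMonoidHom p) := by
  refine ringHom_ext (fun b => ?_) (fun m => ?_)
  · simp [frobenius_def, single_pow, ZMod.pow_card]
  · simp [frobenius_def, single_pow]

theorem perfectRing_zmod [CommMonoid M] (h : Function.Bijective fun m : M => m ^ p) :
    PerfectRing (MonoidAlgebra (ZMod p) M) p := by
  refine ⟨show Function.Bijective (frobenius _ p) from ?_⟩
  rw [frobenius_zmod_eq_mapDomainRingHom]
  exact (mapDomainRingEquiv (ZMod p) (MulEquiv.ofBijective (powMonoidHom p) h)).bijective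

end MonoidAlgebra

section AugmentationIdeal

open MonoidAlgebra

variable {R : Type*} [CommRing R]

local notation "ℤ[" R "]" => MonoidAlgebra ℤ R

theorem piHom_of (r : R) : piHom R (of ℤ R r) = r := by
  simp [piHom]

theorem sub_of_piHom_mem_Iideal (x : ℤ[R]) : x - of ℤ R (piHom R x) ∈ Iideal R := by
  rw [Iideal, RingHom.mem_ker, map_sub, piHom_of, sub_self]

theorem of_zero_mem_Iideal_pow {n : ℕ} (hn : n ≠ 0) : of ℤ R 0 ∈ Iideal R ^ n := by
  rw [← zero_pow hn, map_pow]
  exact Ideal.pow_mem_pow (by rw [Iideal, RingHom.mem_ker, piHom_of]) n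

variable (p : ℕ) [CharP R p]

theorem span_natCast_le_Iideal : Ideal.span {(p : ℤ[R])} ≤ Iideal R := by
  simp [Ideal.span_le, Iideal]

variable [Fact p.Prime]

theorem of_add_sub_of_add_mem (hR : Function.Surjective fun x : R => x ^ p) (r s : R) :
    of ℤ R r + of ℤ R s - of ℤ R (r + s) ∈ Iideal R ^ 2 ⊔ Ideal.span {(p : ℤ[R])} := by
  obtain ⟨a, rfl⟩ := hR r
  obtain ⟨b, rfl⟩ := hR s
  set u := of ℤ R a + of ℤ R b - of ℤ R (a + b) with hu_def
  have hu : u ∈ Iideal R := by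
    simp only [hu_def, Iideal, RingHom.mem_ker, map_add, map_sub, piHom_of, sub_self]
  have hsum : of ℤ R a + of ℤ R b = of ℤ R (a + b) + u := by rw [hu_def]; ring
  clear_value u
  obtain ⟨c, hc⟩ := exists_add_pow_prime_eq (Fact.out : p.Prime) (of ℤ R a) (of ℤ R b)
  obtain ⟨d, hd⟩ := exists_add_pow_prime_eq (Fact.out : p.Prime) (of ℤ R (a + b)) u
  have key : of ℤ R (a ^ p) + of ℤ R (b ^ p) - of ℤ R (a ^ p + b ^ p) =
      u ^ p + p * (of ℤ R (a + b) * u * d - of ℤ R a * of ℤ R b * c) := by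
    rw [← add_pow_char, map_pow, map_pow, map_pow]
    rw [hsum] at hc
    linear_combination hd - hc
  rw [key]
  refine add_mem (Ideal.mem_sup_left ?_)
    (Ideal.mem_sup_right (Ideal.mul_mem_right _ _ (Ideal.subset_span rfl)))
  exact Ideal.pow_le_pow_right (Fact.out : p.Prime).two_le (Ideal.pow_mem_pow hu p)

def ofModSqSupSpan (hR : Function.Surjective fun x : R => x ^ p) :
    R →+ ℤ[R] ⧸ (Iideal R ^ 2 ⊔ Ideal.span {(p : ℤ[R])}) where
  toFun r := Ideal.Quotient.mk _ (of ℤ R r)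
  map_zero' :=
    Ideal.Quotient.eq_zero_iff_mem.2 (Ideal.mem_sup_left (of_zero_mem_Iideal_pow two_ne_zero))
  map_add' r s := by
    rw [← map_add]
    exact (Ideal.Quotient.eq.2 (of_add_sub_of_add_mem p hR r s)).symm

theorem Iideal_le_sq_sup_span (hR : Function.Surjective fun x : R => x ^ p) :
    Iideal R ≤ Iideal R ^ 2 ⊔ Ideal.span {(p : ℤ[R])} := by
  have h : (Ideal.Quotient.mk _).toAddMonoidHom =
      (ofModSqSupSpan p hR).comp (piHom R).toAddMonoidHom := by
    ext r
    show Ideal.Quotient.mk _ (of ℤ R r) = Ideal.Quotient.mk _ (of ℤ R (piHom R (of ℤ R r)))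
    rw [piHom_of]
  intro x hx
  rw [← Ideal.Quotient.eq_zero_iff_mem]
  calc Ideal.Quotient.mk _ x = ofModSqSupSpan p hR (piHom R x) := DFunLike.congr_fun h x
    _ = 0 := by rw [RingHom.mem_ker.1 hx, map_zero]

theorem Iideal_pow_le_sup_span_pow (hR : Function.Surjective fun x : R => x ^ p) (n : ℕ) :
    Iideal R ^ (n + 1) ≤ Iideal R ^ (n + 2) ⊔ Ideal.span {(p : ℤ[R])} ^ (n + 1) := by
  set I := Iideal R
  set P := Ideal.span {(p : ℤ[R])}
  have hPI : P ≤ I := span_natCast_le_Iideal p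
  induction n with
  | zero => simpa using Iideal_le_sq_sup_span p hR
  | succ n ih =>
    calc I ^ (n + 2) = I ^ (n + 1) * I := pow_succ I (n + 1)
      _ ≤ (I ^ (n + 2) ⊔ P ^ (n + 1)) * (I ^ 2 ⊔ P) :=
          Ideal.mul_mono ih (Iideal_le_sq_sup_span p hR)
      _ = I ^ (n + 2) * (I ^ 2 ⊔ P) ⊔ P ^ (n + 1) * I ^ 2 ⊔ P ^ (n + 2) := by
        rw [Ideal.sup_mul, Ideal.mul_sup (P ^ (n + 1)), ← pow_succ, sup_assoc]
      _ ≤ I ^ (n + 3) ⊔ P ^ (n + 2) := by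
        refine sup_le_sup_right (sup_le ?_ ?_) _
        · calc I ^ (n + 2) * (I ^ 2 ⊔ P) ≤ I ^ (n + 2) * I :=
                Ideal.mul_mono_right (sup_le (Ideal.pow_le_self two_ne_zero) hPI)
            _ = I ^ (n + 3) := (pow_succ I (n + 2)).symm
        · calc P ^ (n + 1) * I ^ 2 ≤ I ^ (n + 1) * I ^ 2 :=
                Ideal.mul_mono_left (Ideal.pow_right_mono hPI _)
            _ = I ^ (n + 3) := (pow_add I (n + 1) 2).symm

theorem exists_eq_p_pow_mul_of_add_of_mem_Iideal_pow (hR : Function.Surjective fun x : R => x ^ p)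
    {n : ℕ} {x : ℤ[R]} (hx : x ∈ Iideal R ^ (n + 1)) :
    ∃ (t : R) (y : ℤ[R]), y ∈ Iideal R ^ (n + 2) ∧ x = (p : ℤ[R]) ^ (n + 1) * of ℤ R t + y := by
  obtain ⟨y, hy, w, hw, rfl⟩ := Submodule.mem_sup.1 (Iideal_pow_le_sup_span_pow p hR n hx)
  obtain ⟨z, rfl⟩ :=
    Ideal.mem_span_singleton.1 (Ideal.span_singleton_pow (p : ℤ[R]) (n + 1) ▸ hw)
  refine ⟨piHom R z, y + p ^ (n + 1) * (z - of ℤ R (piHom R z)), add_mem hy ?_, by ring⟩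
  rw [pow_succ (Iideal R)]
  exact Ideal.mul_mem_mul (Ideal.pow_mem_pow (span_natCast_le_Iideal p (Ideal.subset_span rfl)) _)
    (sub_of_piHom_mem_Iideal z)

end AugmentationIdeal

section LamHom

open MonoidAlgebra WittVector

variable (p : ℕ) [Fact p.Prime] (R : Type*) [CommRing R]

local notation "ℤ[" R "]" => MonoidAlgebra ℤ R

theorem lamHom_of (r : R) : lamHom p R (of ℤ R r) = teichmuller p (of (ZMod p) R r) := by
  simp [lamHom]

theorem constantCoeff_comp_lamHom :
    constantCoeff.comp (lamHom p R) = mapRingHom R (Int.castRingHom (ZMod p)) :=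
  ringHom_ext_int fun r => by
    rw [RingHom.comp_apply, lamHom_of]
    simp [constantCoeff_apply]

theorem exists_eq_p_smul_of_lamHom_eq_zero (hR : Function.Bijective fun x : R => x ^ p)
    {x : ℤ[R]} (hx : lamHom p R x = 0) : ∃ z, x = (p : ℤ) • z ∧ lamHom p R z = 0 := by
  have : PerfectRing (MonoidAlgebra (ZMod p) R) p := perfectRing_zmod p hR
  have hdvd (r : R) : (p : ℤ) ∣ x.coeff r := by
    have h := congrArg constantCoeff hx
    rw [← RingHom.comp_apply, constantCoeff_comp_lamHom, map_zero] at h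
    simpa [ZMod.intCast_zmod_eq_zero_iff_dvd] using congrArg (coeff · r) h
  obtain ⟨z, rfl⟩ := exists_eq_smul_of_dvd_coeff _ x hdvd
  refine ⟨z, rfl, eq_zero_of_p_mul_eq_zero _ ?_⟩
  rwa [map_zsmul, zsmul_eq_mul, mul_comm, Int.cast_natCast] at hx

theorem lamHom_injective (hR : Function.Bijective fun x : R => x ^ p) :
    Function.Injective (lamHom p R) := by
  refine (injective_iff_map_eq_zero _).2 fun x hx => ?_
  have hp : (p : ℤ).natAbs ≠ 1 := by simpa using (Fact.out : p.Prime).ne_one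
  refine eq_zero_of_forall_exists_eq_pow_smul hp fun n => ?_
  induction n generalizing x with
  | zero => exact ⟨x, by simp⟩
  | succ n ih =>
    obtain ⟨z, rfl, hz⟩ := exists_eq_p_smul_of_lamHom_eq_zero p R hR hx
    obtain ⟨w, rfl⟩ := ih z hz
    exact ⟨w, by rw [smul_smul, pow_succ']⟩

end LamHom

section MuHom

open MonoidAlgebra WittVector

variable (p : ℕ) [Fact p.Prime] (R : Type*) [CommRing R] [CharP R p]

local notation "ℤ[" R "]" => MonoidAlgebra ℤ R

def muHom : ℤ[R] →+* WittVector p R :=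
  (WittVector.map (piBar p R)).comp (lamHom p R)

theorem piBar_of (r : R) : piBar p R (of (ZMod p) R r) = r := by
  let _ := ZMod.algebra R p
  simp [piBar]

theorem muHom_of (r : R) : muHom p R (of ℤ R r) = teichmuller p r := by
  rw [muHom, RingHom.comp_apply, lamHom_of, map_teichmuller, piBar_of]

theorem constantCoeff_comp_muHom : constantCoeff.comp (muHom p R) = piHom R :=
  ringHom_ext_int fun r => by
    rw [RingHom.comp_apply, muHom_of, piHom_of]
    simp [constantCoeff_apply]

variable {p R} [PerfectRing R p]

theorem map_muHom_Iideal_le : (Iideal R).map (muHom p R) ≤ Ideal.span {(p : WittVector p R)} := by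
  refine Ideal.map_le_iff_le_comap.2 fun x hx => ?_
  rw [Ideal.mem_comap, mem_span_p_iff_coeff_zero_eq_zero, ← constantCoeff_apply,
    ← RingHom.comp_apply, constantCoeff_comp_muHom]
  exact hx

theorem muHom_mem_span_p_pow {n : ℕ} {x : ℤ[R]} (hx : x ∈ Iideal R ^ n) :
    muHom p R x ∈ Ideal.span {(p : WittVector p R) ^ n} := by
  rw [← Ideal.span_singleton_pow]
  refine Ideal.pow_right_mono map_muHom_Iideal_le n ?_
  rw [← Ideal.map_pow]
  exact Ideal.mem_map_of_mem _ hx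

theorem muHom_eq_zero_of_mem_iInf {x : ℤ[R]} (hx : x ∈ ⨅ n : ℕ, Iideal R ^ (n + 1)) :
    muHom p R x = 0 := by
  ext n
  have h := muHom_mem_span_p_pow (Ideal.mem_iInf.1 hx n)
  rw [mem_span_p_pow_iff_le_coeff_eq_zero] at h
  rw [zero_coeff]
  exact h n n.lt_succ_self

theorem teichmuller_eq_zero_of_mul_p_pow_mem {t : R} {m : ℕ}
    (h : teichmuller p t * p ^ m ∈ Ideal.span {(p : WittVector p R) ^ (m + 1)}) : t = 0 := by
  rw [mem_span_p_pow_iff_le_coeff_eq_zero] at h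
  have ht := h (0 + m) (by omega)
  rw [mul_pow_charP_coeff_succ, teichmuller_coeff_zero] at ht
  exact (iterateFrobeniusEquiv R p m).map_eq_zero_iff.1 ht

theorem mem_Iideal_pow_of_muHom_eq_zero {x : ℤ[R]} (hx : muHom p R x = 0) (n : ℕ) :
    x ∈ Iideal R ^ (n + 1) := by
  induction n with
  | zero =>
    rw [zero_add, pow_one, Iideal, RingHom.mem_ker, ← constantCoeff_comp_muHom, RingHom.comp_apply,
      hx, map_zero]
  | succ n ih =>
    obtain ⟨t, y, hy, rfl⟩ :=
      exists_eq_p_pow_mul_of_add_of_mem_Iideal_pow p PerfectRing.bijective_frobenius.2 ih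
    have ht : teichmuller p t * p ^ (n + 1) ∈ Ideal.span {(p : WittVector p R) ^ (n + 2)} := by
      rw [map_add, map_mul, map_pow, map_natCast, muHom_of, ← eq_neg_iff_add_eq_zero] at hx
      rw [mul_comm, hx]
      exact neg_mem (muHom_mem_span_p_pow hy)
    rw [teichmuller_eq_zero_of_mul_p_pow_mem ht]
    exact add_mem (Ideal.mul_mem_left _ _ (of_zero_mem_Iideal_pow (by omega))) hy

theorem iInf_Iideal_pow_eq_ker_muHom : ⨅ n : ℕ, Iideal R ^ (n + 1) = RingHom.ker (muHom p R) :=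
  le_antisymm (fun _ hx => muHom_eq_zero_of_mem_iInf hx)
    (fun _ hx => Ideal.mem_iInf.2 (mem_Iideal_pow_of_muHom_eq_zero hx))

end MuHom

/-- For a perfect `𝔽_p`-algebra `R`, the map `λ : ℤR → 𝕎(𝔽_pR)` is injective
and `⋂_{n ≥ 1} I^n = λ⁻¹(ker(𝕎(π̄) : 𝕎(𝔽_pR) → 𝕎 R))`. -/
theorem statement14 (p : ℕ) [Fact p.Prime] (R : Type*) [CommRing R] [CharP R p]
    (hperfect : Function.Bijective fun x : R => x ^ p) :
    Function.Injective (lamHom p R) ∧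
    (⨅ n : ℕ, (Iideal R) ^ (n + 1)) =
      (RingHom.ker (WittVector.map (p := p) (piBar p R))).comap (lamHom p R) := by
  have : PerfectRing R p := ⟨hperfect⟩
  exact ⟨lamHom_injective p R hperfect,
    iInf_Iideal_pow_eq_ker_muHom.trans (RingHom.comap_ker _ _).symm⟩

end
end
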